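/- Let ω(x) = e^{2x}/(x+1)² and let θ : (−1, ∞) → ℝ be any differentiable function with θ'(x) = 12 e^{2x}/(x+1)³ on (−1, ∞). Then θ is not a rational function of x and ω: there do not exist real polynomials P, Q in two variables such that Q(x, ω(x)) ≠ 0 for all x ∈ (−1, ∞) and θ(x) = P(x, ω(x))/Q(x, ω(x)) for all x ∈ (−1, ∞). -/

import Mathlib

noncomputable def ω (x : ℝ) : ℝ := Real.exp (2 * x) / (x + 1)^2

/-!
Put `t = x + 1`. Both `x` and `ω` are meromorphic at `x = -1`, hence so is any rational
expression in them, and near `t = 0⁺` one can write `θ(t - 1) = A(t) / t^(n+2)` with `A` analytic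
at `0`. The equation for `θ'` then reads `(t d/dt - (n + 2)) A = 12 e⁻² tⁿ e^(2t)`. The operator
`t d/dt - j` kills the Taylor coefficient of `t^j`, whereas the coefficient of `t^(n+2)` on the
right is `24 e⁻² ≠ 0`. In other words, `θ'` has a nonzero residue at `x = -1`, which the derivative
of a meromorphic function never has.
-/

open Filter Topology Real

section EulerOperator

variable {𝕜 : Type*} [NontriviallyNormedField 𝕜]

noncomputable def eulerOp (j : ℕ) (A : 𝕜 → 𝕜) (t : 𝕜) : 𝕜 := t * deriv A t - j * A t

lemma iteratedDeriv_pow_mul_zero {g : 𝕜 → 𝕜} (m k : ℕ) (hg : ContDiffAt 𝕜 (m + k : ℕ) g 0) :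
    iteratedDeriv (m + k) (fun t => t ^ m * g t) 0
      = (m + k).choose m * m.factorial * iteratedDeriv k g 0 := by
  rw [iteratedDeriv_fun_mul (f := fun t => t ^ m) (by fun_prop) hg, Finset.sum_eq_single m]
  · simp [Nat.descFactorial_self]
  · intro i _ hi
    simp only [iteratedDeriv_fun_pow_zero, if_neg hi]
    simp
  · simp

lemma iteratedDeriv_eulerOp_self [CompleteSpace 𝕜] {A : 𝕜 → 𝕜} (hA : AnalyticAt 𝕜 A 0)
    (j : ℕ) : iteratedDeriv j (eulerOp j A) 0 = 0 := by
  cases j with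
  | zero => simp [eulerOp]
  | succ j =>
    have hmul := iteratedDeriv_pow_mul_zero 1 j hA.deriv.contDiffAt
    simp only [pow_one, add_comm 1 j] at hmul
    unfold eulerOp
    rw [iteratedDeriv_fun_sub (f := fun t => t * deriv A t) (g := fun t => ((j + 1 : ℕ) : 𝕜) * A t)
        (contDiffAt_id.mul hA.deriv.contDiffAt) (contDiffAt_const.mul hA.contDiffAt), hmul,
      iteratedDeriv_const_mul _ hA.contDiffAt, ← iteratedDeriv_succ']
    simp

lemma iteratedDeriv_eq_zero_of_frequently_eulerOp_eq [CompleteSpace 𝕜] [CharZero 𝕜]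
    {A g : 𝕜 → 𝕜} {m k : ℕ} (hA : AnalyticAt 𝕜 A 0) (hg : AnalyticAt 𝕜 g 0)
    (h : ∃ᶠ t in 𝓝[≠] 0, eulerOp (m + k) A t = t ^ m * g t) :
    iteratedDeriv k g 0 = 0 := by
  have hE : AnalyticAt 𝕜 (eulerOp (m + k) A) 0 := by
    unfold eulerOp; fun_prop
  have heq : eulerOp (m + k) A =ᶠ[𝓝 0] fun t => t ^ m * g t :=
    (hE.frequently_eq_iff_eventually_eq (by fun_prop)).1 h
  have hcoeff := heq.iteratedDeriv_eq (m + k)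
  rw [iteratedDeriv_eulerOp_self hA, iteratedDeriv_pow_mul_zero m k hg.contDiffAt] at hcoeff
  have hne : ((m + k).choose m * m.factorial : 𝕜) ≠ 0 := by
    exact_mod_cast (Nat.mul_pos (Nat.choose_pos (by omega)) m.factorial_pos).ne'
  exact (mul_eq_zero.1 hcoeff.symm).resolve_left hne

lemma eulerOp_eq_of_eventuallyEq_pow_mul {A f : 𝕜 → 𝕜} {f' t : 𝕜} {j : ℕ}
    (hA : A =ᶠ[𝓝 t] fun u => u ^ j * f u) (hf : HasDerivAt f f' t) :
    eulerOp j A t = t ^ (j + 1) * f' := by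
  rw [eulerOp, hA.deriv_eq, hA.eq_of_nhds, ((hasDerivAt_pow j t).fun_mul hf).deriv]
  cases j with
  | zero => simp
  | succ j => simp; ring

end EulerOperator

lemma MeromorphicAt.mvPolynomial_eval {𝕜 σ : Type*} [NontriviallyNormedField 𝕜]
    {v : 𝕜 → σ → 𝕜} {x : 𝕜} (hv : ∀ i, MeromorphicAt (fun t => v t i) x)
    (p : MvPolynomial σ 𝕜) : MeromorphicAt (fun t => MvPolynomial.eval (v t) p) x := by
  induction p using MvPolynomial.induction_on with
  | C a => simp only [MvPolynomial.eval_C]; exact .const a x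
  | add p q hp hq => simp only [map_add]; exact hp.add hq
  | mul_X p i hp => simp only [map_mul, MvPolynomial.eval_X]; exact hp.mul (hv i)

/-- If `θ : (−1, ∞) → ℝ` is differentiable with `θ'(x) = 12 e^{2x}/(x+1)³` on
`(−1, ∞)`, then `θ` is not a rational function of `x` and `ω`: there are no real
polynomials `P, Q` in two variables with `Q(x, ω(x)) ≠ 0` on `(−1, ∞)` and
`θ(x) = P(x, ω(x))/Q(x, ω(x))` on `(−1, ∞)`. -/
theorem theta_not_rational (θ : ℝ → ℝ)
    (hθ : ∀ x ∈ Set.Ioi (-1 : ℝ),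
      HasDerivAt θ (12 * Real.exp (2 * x) / (x + 1)^3) x) :
    ¬ ∃ P Q : MvPolynomial (Fin 2) ℝ,
      (∀ x ∈ Set.Ioi (-1 : ℝ), MvPolynomial.eval ![x, ω x] Q ≠ 0) ∧
      (∀ x ∈ Set.Ioi (-1 : ℝ),
        θ x = MvPolynomial.eval ![x, ω x] P / MvPolynomial.eval ![x, ω x] Q) := by
  rintro ⟨P, Q, -, hPQ⟩
  set R : ℝ → ℝ := fun t => MvPolynomial.eval ![t - 1, ω (t - 1)] P /
    MvPolynomial.eval ![t - 1, ω (t - 1)] Q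
  have hv : ∀ i, MeromorphicAt (fun t : ℝ => ![t - 1, ω (t - 1)] i) 0 := by
    simp only [Fin.forall_fin_two, Matrix.cons_val_zero, Matrix.cons_val_one, ω, sub_add_cancel]
    constructor <;> fun_prop
  obtain ⟨n, hn⟩ : MeromorphicAt R 0 :=
    (MeromorphicAt.mvPolynomial_eval hv P).div (MeromorphicAt.mvPolynomial_eval hv Q)
  set A : ℝ → ℝ := fun t => t ^ 2 * ((t - 0) ^ n • R t)
  have hA : AnalyticAt ℝ A 0 := (analyticAt_id.pow 2).mul hn
  have hEuler : ∀ t ∈ Set.Ioi (0 : ℝ),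
      eulerOp (n + 2) A t = t ^ n * (12 * exp (-2) * exp (2 * t)) := by
    intro t (ht : 0 < t)
    have hA_eq : A =ᶠ[𝓝 t] fun u => u ^ (n + 2) * θ (u - 1) := by
      filter_upwards [lt_mem_nhds ht] with u hu
      simp only [A, R, smul_eq_mul, sub_zero, hPQ (u - 1) (by simp; linarith)]
      ring
    have hθt := (hθ (t - 1) (by simp; linarith)).comp_sub_const t 1
    rw [eulerOp_eq_of_eventuallyEq_pow_mul hA_eq hθt, sub_add_cancel,
      show 2 * (t - 1) = -2 + 2 * t by ring, exp_add]
    field_simp [ht.ne']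
    ring
  have hcoeff := iteratedDeriv_eq_zero_of_frequently_eulerOp_eq (k := 2)
    (g := fun t => 12 * exp (-2) * exp (2 * t)) hA (by fun_prop)
    ((eventually_nhdsWithin_of_forall hEuler).frequently.filter_mono (nhdsGT_le_nhdsNE 0))
  simp at hcoeff
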